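/- arXiv:1612.04243 — 4 statements merged into one kernel-verified Lean document; each statement's English description precedes it below -/
import Mathlib

section
/- Let G be a finite group and H ≤ G a nonnormal subgroup of order 2. Let r = [Z_G(H) : H] and let q be defined by [G : H] = r + 2q. Then r and q are positive integers and r divides 2q. -/
/-!
Being of order two, `H` is abelian and so lies in its centralizer `C`; hence
`[G : H] = r · [G : C]`. Since `H` is not normal, `C ≠ G`, so `[G : C] ≥ 2` and
`2q = [G : H] - r = r · ([G : C] - 1)` is a positive multiple of `r`.
-/

namespace Subgroup

variable {G : Type*} [Group G] (H : Subgroup G)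

theorem normal_of_centralizer_eq_top (h : centralizer (H : Set G) = ⊤) : H.Normal :=
  normalizer_eq_top_iff.mp (top_le_iff.mp (h ▸ centralizer_le_normalizer _))

theorem one_lt_index_centralizer_of_not_normal [Finite (G ⧸ centralizer (H : Set G))] (hH : ¬ H.Normal) :
    1 < (centralizer (H : Set G)).index :=
  one_lt_index_of_ne_top fun h ↦ hH (H.normal_of_centralizer_eq_top h)

theorem relIndex_centralizer_mul_index [IsMulCommutative H] :
    H.relIndex (centralizer (H : Set G)) * (centralizer (H : Set G)).index = H.index :=
  relIndex_mul_index (le_centralizer H)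

end Subgroup

/-- For a nonnormal subgroup `H` of order 2 of a finite group `G`, with
`r = [Z_G(H) : H]` and `[G : H] = r + 2q`, both `r` and `q` are positive and `r ∣ 2q`. -/
theorem order_two_nonnormal_r_divides_two_q {G : Type*} [Group G] [Finite G]
    (H : Subgroup G) (hcard : Nat.card H = 2) (hnn : ¬ H.Normal) (r q : ℕ)
    (hr : r = H.relIndex (Subgroup.centralizer (H : Set G)))
    (hq : H.index = r + 2 * q) :
    0 < r ∧ 0 < q ∧ r ∣ 2 * q := by
  have : Fact (Nat.Prime 2) := ⟨Nat.prime_two⟩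
  have : IsMulCommutative H := (isCyclic_of_prime_card hcard).isMulCommutative
  have hrC : r * (Subgroup.centralizer (H : Set G)).index = H.index := by
    rw [hr, H.relIndex_centralizer_mul_index]
  have hr₀ : 0 < r :=
    Nat.pos_of_ne_zero (left_ne_zero_of_mul (hrC ▸ Subgroup.FiniteIndex.index_ne_zero))
  have hC : 1 < (Subgroup.centralizer (H : Set G)).index :=
    H.one_lt_index_centralizer_of_not_normal hnn
  rw [hq] at hrC
  exact ⟨hr₀, by nlinarith, (Nat.dvd_add_right dvd_rfl).mp (hrC ▸ dvd_mul_right r _)⟩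
end

section
/- Let r and q be positive integers with r dividing 2q, and write 2q = m·r with m even. Let G = ℤ_r × (ℤ_{m+1} ⋊ ℤ₂), where ℤ₂ acts on ℤ_{m+1} by n ↦ −n, and let H be the copy of ℤ₂ inside the semidirect product factor. Then H is a subgroup of G of order 2 with [Z_G(H) : H] = r and [G : H] = r + 2q. -/
/-- The inversion automorphism `n ↦ -n` of `ℤ_k`, written multiplicatively. -/
noncomputable def negAut (k : ℕ) : MulAut (Multiplicative (ZMod k)) :=
  MulEquiv.inv (Multiplicative (ZMod k))

/-- The action of `ℤ₂` on `ℤ_k` by inversion, as a homomorphism into the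
automorphism group. -/
noncomputable def invHom (k : ℕ) :
    Multiplicative (ZMod 2) →* MulAut (Multiplicative (ZMod k)) :=
  AddMonoidHom.toMultiplicativeLeft
    (ZMod.lift 2 ⟨zmultiplesHom _ (Additive.ofMul (negAut k)), by
      have h2 : negAut k * negAut k = 1 := by
        ext x
        exact inv_inv x
      simp [two_zsmul, ← ofMul_mul, h2]⟩)

/-!
The generator `g = (1, s)` of `H` has order 2. Since `ℤ₂` is abelian, an element of the
semidirect factor commutes with `s` iff its `ℤ_{m+1}`-component is fixed by inversion; as `m + 1`
is odd, inversion has no nontrivial fixed point, so `Z_G(H) = ℤ_r × ⟨s⟩` has order `2r`. Both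
indices then follow from Lagrange's theorem, using `|G| = 2r(m + 1)` and `r(m + 1) = r + 2q`.
-/

open MonoidHom Subgroup

lemma coe_invHom_ofAdd_one (k : ℕ) :
    ⇑(invHom k (Multiplicative.ofAdd 1)) = fun x => x⁻¹ := rfl

lemma Nat.card_multiplicative (α : Type*) : Nat.card (Multiplicative α) = Nat.card α :=
  Nat.card_congr Multiplicative.toAdd

lemma fixedPointFree_inv_of_odd_card {G : Type*} [Group G] (h : Odd (Nat.card G)) :
    FixedPointFree (fun g : G => g⁻¹) := by
  intro g hg
  have hsq : g ^ 2 = 1 := by rw [sq]; nth_rw 1 [← hg]; exact inv_mul_cancel g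
  have hcop : Nat.Coprime 2 (Nat.card G) := Nat.coprime_two_left.mpr h
  exact orderOf_eq_one_iff.mp <|
    (hcop.coprime_dvd_left (orderOf_dvd_of_pow_eq_one hsq)).eq_one_of_dvd (orderOf_dvd_natCard g)

lemma Subgroup.card_mul_relIndex {G : Type*} [Group G] {H K : Subgroup G} (h : H ≤ K) :
    Nat.card H * H.relIndex K = Nat.card K := by
  rw [← relIndex_bot_left, ← relIndex_bot_left, relIndex_mul_relIndex _ _ _ bot_le h]

lemma Subgroup.centralizer_singleton_prod {A B : Type*} [CommGroup A] [Group B] (a : A) (b : B) :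
    centralizer {(a, b)} = (⊤ : Subgroup A).prod (centralizer {b}) := by
  ext x
  simp only [mem_centralizer_singleton_iff, Prod.ext_iff, Prod.fst_mul, mul_comm x.1,
    Prod.snd_mul, true_and, mem_prod, mem_top]

lemma SemidirectProduct.centralizer_inr_eq_range {N G : Type*} [Group N] [CommGroup G]
    {φ : G →* MulAut N} {g : G} (hg : FixedPointFree (φ g)) :
    centralizer {(inr g : N ⋊[φ] G)} = inr.range := by
  ext x
  rw [mem_centralizer_singleton_iff]
  constructor
  · intro hx
    have hfix : φ g x.left = x.left := by
      simpa only [mul_left, left_inr, right_inr, one_mul, map_one, mul_one]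
        using congrArg left hx.symm
    exact ⟨x.right, by ext <;> simp only [left_inr, right_inr, hg _ hfix]⟩
  · rintro ⟨h, rfl⟩
    rw [← map_mul, ← map_mul, mul_comm]

theorem exists_group_case_m_even_general (r q m : ℕ)
    (hm : 2 * q = m * r) (hme : Even m) :
    ∀ H : Subgroup (Multiplicative (ZMod r) ×
        (Multiplicative (ZMod (m + 1)) ⋊[invHom (m + 1)] Multiplicative (ZMod 2))),
      H = Subgroup.zpowers
          ((1, SemidirectProduct.inr (Multiplicative.ofAdd (1 : ZMod 2)))) →
      Nat.card H = 2 ∧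
      H.relIndex (Subgroup.centralizer (H : Set _)) = r ∧
      H.index = r + 2 * q := by
  rintro H rfl
  set s := SemidirectProduct.inr (φ := invHom (m + 1)) (Multiplicative.ofAdd (1 : ZMod 2))
  set g : Multiplicative (ZMod r) × _ := (1, s)
  have hcard : Nat.card (zpowers g) = 2 := by
    rw [Nat.card_zpowers, Prod.orderOf, orderOf_injective _ SemidirectProduct.inr_injective]
    simp [g]
  have hfree : FixedPointFree (invHom (m + 1) (Multiplicative.ofAdd 1)) :=
    coe_invHom_ofAdd_one (m + 1) ▸ fixedPointFree_inv_of_odd_card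
      (by simpa [Nat.card_multiplicative] using hme.add_one)
  have hcent : Subgroup.centralizer (zpowers g : Set _) =
      (⊤ : Subgroup (Multiplicative (ZMod r))).prod
        (SemidirectProduct.inr (φ := invHom (m + 1))).range := by
    rw [zpowers_eq_closure, centralizer_closure, centralizer_singleton_prod,
      SemidirectProduct.centralizer_inr_eq_range hfree]
  refine ⟨hcard, ?_, ?_⟩
  · have h := card_mul_relIndex (hcent ▸ le_centralizer (zpowers g))
    rw [hcent]
    rw [hcard, Nat.card_congr (prodEquiv _ _).toEquiv, Nat.card_prod, card_top,
      ← Nat.card_congr (ofInjective SemidirectProduct.inr_injective).toEquiv] at h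
    simp only [Nat.card_multiplicative, Nat.card_zmod] at h
    omega
  · have h := card_mul_index (zpowers g)
    simp only [hcard, Nat.card_prod, SemidirectProduct.card, Nat.card_multiplicative,
      Nat.card_zmod] at h
    linarith

/-- For positive integers `r, q` with `2q = m·r` and `m` even, the group
`G = ℤ_r × (ℤ_{m+1} ⋊ ℤ₂)` (inversion action) with `H` the copy of `ℤ₂` in the
semidirect factor satisfies `|H| = 2`, `[Z_G(H) : H] = r`, `[G : H] = r + 2q`. -/
theorem exists_group_case_m_even (r q m : ℕ) (hr : 0 < r) (hq : 0 < q)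
    (hm : 2 * q = m * r) (hme : Even m) :
    ∀ H : Subgroup (Multiplicative (ZMod r) ×
        (Multiplicative (ZMod (m + 1)) ⋊[invHom (m + 1)] Multiplicative (ZMod 2))),
      H = Subgroup.zpowers
          ((1, SemidirectProduct.inr (Multiplicative.ofAdd (1 : ZMod 2)))) →
      Nat.card H = 2 ∧
      H.relIndex (Subgroup.centralizer (H : Set _)) = r ∧
      H.index = r + 2 * q :=
  exists_group_case_m_even_general r q m hm hme
end

section
/- For every pair of positive integers (r, q), there exists a finite group G with a nonnormal subgroup H of order 2 such that [Z_G(H) : H] = r and [G : H] = r + 2q, if and only if r divides 2q. -/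
/-!
A subgroup of order 2 is abelian, so `H ≤ Z_G(H)` and `r = [Z_G(H) : H]` divides
`[G : H] = r + 2q`.

Conversely, write `2q = rm`. A reflection `s` of the dihedral group `D_n`, `n ≥ 3`, spans a
nonnormal subgroup of index `n`, and `Z(s)` consists of the rotations and reflections indexed by
the two-torsion of `ZMod n`, so `[Z(s) : ⟨s⟩] = gcd(n, 2)`. Passing to `C_k × D_n` with
`H = 1 × ⟨s⟩` multiplies both indices by `k`. Take `k = r`, `n = m + 1` when `r` is odd (then `m`
is even), and `k = r / 2`, `n = 2(m + 1)` when `r` is even.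
-/

open Subgroup

namespace Subgroup

variable {G N : Type*} [Group G] [Group N]

theorem centralizer_prod (H : Subgroup G) (K : Subgroup N) :
    centralizer (H.prod K : Set (G × N)) = (centralizer (H : Set G)).prod (centralizer K) := by
  ext ⟨g, n⟩
  simp only [mem_prod, mem_centralizer_iff, SetLike.mem_coe, Prod.forall, Prod.mk_mul_mk,
    Prod.ext_iff]
  exact ⟨fun h => ⟨fun x hx => (h x 1 ⟨hx, K.one_mem⟩).1, fun y hy => (h 1 y ⟨H.one_mem, hy⟩).2⟩,
    fun h x y hxy => ⟨h.1 x hxy.1, h.2 y hxy.2⟩⟩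

theorem relIndex_prod (H H' : Subgroup G) (K K' : Subgroup N) :
    (H.prod K).relIndex (H'.prod K') = H.relIndex H' * K.relIndex K' := by
  have : (H.prod K).subgroupOf (H'.prod K') =
      ((H.subgroupOf H').prod (K.subgroupOf K')).comap (prodEquiv H' K').toMonoidHom := by
    ext; simp only [mem_subgroupOf, mem_prod, mem_comap]; rfl
  rw [relIndex, this, index_comap_of_surjective _ (prodEquiv H' K').surjective, index_prod]
  rfl

theorem Normal.of_prod_right {H : Subgroup G} {K : Subgroup N} (h : (H.prod K).Normal) :
    K.Normal := by
  have : (H.prod K).comap (MonoidHom.inr G N) = K := by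
    ext; simp [mem_prod, H.one_mem]
  exact this ▸ h.comap _

theorem relIndex_centralizer_dvd_index_of_prime_card {p : ℕ} [Fact p.Prime] {H : Subgroup G}
    (hH : Nat.card H = p) : H.relIndex (centralizer (H : Set G)) ∣ H.index := by
  have : IsCyclic H := isCyclic_of_prime_card hH
  let := IsCyclic.commGroup (α := H)
  exact relIndex_dvd_index_of_le (le_centralizer H)

end Subgroup

namespace DihedralGroup

variable {n : ℕ}

theorem commute_r_sr_zero_iff (i : ZMod n) : Commute (r i) (sr 0) ↔ 2 • i = 0 := by
  rw [Commute, SemiconjBy, sr_mul_r, r_mul_sr, sr.injEq, zero_add, zero_sub,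
    neg_eq_iff_add_eq_zero, two_nsmul]

theorem commute_sr_sr_zero_iff (i : ZMod n) : Commute (sr i) (sr 0) ↔ 2 • i = 0 := by
  rw [Commute, SemiconjBy, sr_mul_sr, sr_mul_sr, r.injEq, sub_zero, zero_sub,
    neg_eq_iff_add_eq_zero, two_nsmul]

theorem nat_card_centralizer_sr_zero [NeZero n] :
    Nat.card (centralizer {sr (0 : ZMod n)}) = 2 * n.gcd 2 := by
  let twoTorsion := (nsmulAddMonoidHom 2 : ZMod n →+ ZMod n).ker
  have hmem : ∀ x, x ∈ centralizer {sr (0 : ZMod n)} ↔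
      Sum.elim (· ∈ twoTorsion) (· ∈ twoTorsion) (equivSum x) := by
    rintro (i | i)
    exacts [mem_centralizer_singleton_iff.trans (commute_r_sr_zero_iff i),
      mem_centralizer_singleton_iff.trans (commute_sr_sr_zero_iff i)]
  have e : centralizer {sr (0 : ZMod n)} ≃ twoTorsion ⊕ twoTorsion :=
    (equivSum.subtypeEquiv hmem).trans Equiv.subtypeSum
  rw [Nat.card_congr e, Nat.card_sum, IsAddCyclic.card_nsmulAddMonoidHom_ker, Nat.card_zmod]
  ring

theorem nat_card_zpowers_sr (i : ZMod n) : Nat.card (zpowers (sr i)) = 2 := by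
  rw [Nat.card_zpowers, orderOf_sr]

theorem index_zpowers_sr (i : ZMod n) : (zpowers (sr i)).index = n := by
  have := card_mul_index (zpowers (sr i))
  rw [nat_card_zpowers_sr, nat_card] at this
  omega

theorem relIndex_zpowers_sr_zero_centralizer [NeZero n] :
    (zpowers (sr (0 : ZMod n))).relIndex
      (centralizer (zpowers (sr (0 : ZMod n)) : Set (DihedralGroup n))) = n.gcd 2 := by
  have hC : Nat.card (centralizer (zpowers (sr (0 : ZMod n)) : Set (DihedralGroup n))) =
      2 * n.gcd 2 := by
    rw [zpowers_eq_closure, centralizer_closure, nat_card_centralizer_sr_zero]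
  have := relIndex_mul_relIndex ⊥ _ _ bot_le (le_centralizer (zpowers (sr (0 : ZMod n))))
  rw [relIndex_bot_left, relIndex_bot_left, nat_card_zpowers_sr, hC] at this
  omega

theorem not_normal_zpowers_sr_zero (hn : 3 ≤ n) : ¬ (zpowers (sr (0 : ZMod n))).Normal := by
  have : NeZero n := ⟨by omega⟩
  intro h
  have hconj := h.conj_mem _ (mem_zpowers _) (r 1)
  simp only [r_mul_sr, inv_r, sr_mul_r, mem_zpowers_iff_mem_range_orderOf, orderOf_sr,
    Finset.mem_image, Finset.mem_range] at hconj
  obtain ⟨a, ha, hpow⟩ := hconj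
  interval_cases a
  · rw [pow_zero, one_def] at hpow
    cases hpow
  · have h2 : ((2 : ℕ) : ZMod n) = 0 := by
      rw [pow_one, sr.injEq] at hpow
      push_cast
      linear_combination hpow
    have := Nat.le_of_dvd two_pos ((ZMod.natCast_eq_zero_iff _ _).mp h2)
    omega

end DihedralGroup

open DihedralGroup in
theorem exists_prod_dihedralGroup (A : Type) [Group A] [Finite A] {n r i : ℕ} (hn : 3 ≤ n)
    (hr : Nat.card A * n.gcd 2 = r) (hi : Nat.card A * n = i) :
    ∃ (G : Type) (_ : Group G) (_ : Finite G) (H : Subgroup G),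
      ¬ H.Normal ∧ Nat.card H = 2 ∧ H.relIndex (centralizer (H : Set G)) = r ∧ H.index = i := by
  subst hr hi
  have : NeZero n := ⟨by omega⟩
  have hcent : centralizer ((⊥ : Subgroup A) : Set A) = ⊤ :=
    centralizer_eq_top_iff_subset.mpr (SetLike.coe_subset_coe.mpr bot_le)
  refine ⟨A × DihedralGroup n, inferInstance, inferInstance, (⊥ : Subgroup A).prod (zpowers (sr 0)),
    fun h => not_normal_zpowers_sr_zero hn h.of_prod_right, ?_, ?_, ?_⟩
  · rw [Nat.card_congr (prodEquiv _ _).toEquiv, Nat.card_prod, card_bot, nat_card_zpowers_sr,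
      one_mul]
  · rw [centralizer_prod, relIndex_prod, hcent, relIndex_bot_left, card_top,
      relIndex_zpowers_sr_zero_centralizer]
  · rw [index_prod, index_bot, index_zpowers_sr]

/-- A pair `(r, q)` of positive integers arises as `r = [Z_G(H) : H]`,
`[G : H] = r + 2q` for a nonnormal subgroup `H ≃ ℤ₂` of a finite group `G`
if and only if `r ∣ 2q`. -/
theorem exists_group_iff_r_dvd_two_q (r q : ℕ) (hr : 0 < r) (hq : 0 < q) :
    (∃ (G : Type) (_ : Group G) (_ : Finite G) (H : Subgroup G),
        ¬ H.Normal ∧ Nat.card H = 2 ∧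
        H.relIndex (Subgroup.centralizer (H : Set G)) = r ∧
        H.index = r + 2 * q) ↔ r ∣ 2 * q := by
  constructor
  · rintro ⟨G, _, _, H, -, hH, hrel, hidx⟩
    have := relIndex_centralizer_dvd_index_of_prime_card hH
    rw [hrel, hidx] at this
    exact (Nat.dvd_add_right dvd_rfl).mp this
  · rintro ⟨m, hm⟩
    have hm0 : m ≠ 0 := by rintro rfl; omega
    rcases Nat.even_or_odd r with ⟨k, rfl⟩ | hr_odd
    · have : NeZero k := ⟨by omega⟩
      have hk : Nat.card (Multiplicative (ZMod k)) = k := Nat.card_zmod k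
      exact exists_prod_dihedralGroup (Multiplicative (ZMod k)) (n := 2 * (m + 1)) (by omega)
        (by simp [mul_two]) (by rw [hk, hm]; ring)
    · have hm_even : Even m := (Nat.even_mul.mp ⟨q, by rw [← hm, two_mul]⟩).resolve_left
        (Nat.not_even_iff_odd.mpr hr_odd)
      have : NeZero r := ⟨hr.ne'⟩
      have hk : Nat.card (Multiplicative (ZMod r)) = r := Nat.card_zmod r
      exact exists_prod_dihedralGroup (Multiplicative (ZMod r)) (n := m + 1)
        (by obtain ⟨a, rfl⟩ := hm_even; omega)
        (by rw [hk, Nat.coprime_two_right.mpr hm_even.add_one, mul_one]) (by rw [hk, hm]; ring)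
end

section
/- Let p > q > 0 be integers with a = gcd(p, q), u = p/a, v = q/a, and g = u² − v². Let B = [[p, q], [q, p]] acting on ℤ². Then ℤ²/B(ℤ²) ≅ ℤ_a ⊕ ℤ_{a·g}; moreover if z, w ∈ ℤ satisfy zu + wv = 1, then under a suitable such isomorphism the class of (1,1) corresponds to (z + w mod a, u − v mod a·g). -/
/-!
Write `p = a u`, `q = a v`, so `B = a • [[u, v], [v, u]]`. Since `z u + w v = 1`, the matrix
`P = [[z, w], [-v, u]]` is unimodular and `P B = a • [[1, z v + w u], [0, g]]`; one column
operation brings this to `diag(a, a g)`. Hence `x ↦ P x`, read modulo `(a, a g)`, is a surjection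
`ℤ² → ℤ_a × ℤ_{a g}` with kernel `B ℤ²`, and it sends `(1, 1)` to `(z + w, u - v)`.
-/

namespace CokerSymmetric

variable (a g : ℕ) (u v z w : ℤ)

def cokerMap : (Fin 2 → ℤ) →ₗ[ℤ] ZMod a × ZMod (a * g) where
  toFun x := (((z * x 0 + w * x 1 : ℤ) : ZMod a), ((u * x 1 - v * x 0 : ℤ) : ZMod (a * g)))
  map_add' x y := by
    simp only [Pi.add_apply, Prod.mk_add_mk, Prod.mk.injEq]
    constructor <;> push_cast <;> ring
  map_smul' c x := by
    simp only [Pi.smul_apply, smul_eq_mul, RingHom.id_apply, Prod.smul_mk, zsmul_eq_mul,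
      Prod.mk.injEq]
    constructor <;> push_cast <;> ring

@[simp]
theorem cokerMap_apply (x : Fin 2 → ℤ) :
    cokerMap a g u v z w x =
      (((z * x 0 + w * x 1 : ℤ) : ZMod a), ((u * x 1 - v * x 0 : ℤ) : ZMod (a * g))) :=
  rfl

variable {u v z w}

theorem cokerMap_surjective (hzw : z * u + w * v = 1) :
    Function.Surjective (cokerMap a g u v z w) := by
  rintro ⟨s, t⟩
  obtain ⟨s, rfl⟩ := ZMod.intCast_surjective s
  obtain ⟨t, rfl⟩ := ZMod.intCast_surjective t
  refine ⟨![u * s - w * t, v * s + z * t], ?_⟩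
  simp only [cokerMap_apply, Matrix.cons_val_zero, Matrix.cons_val_one, Prod.mk.injEq]
  constructor <;> congr 1
  · linear_combination s * hzw
  · linear_combination t * hzw

variable {g}

theorem ker_cokerMap (hg : (g : ℤ) = u ^ 2 - v ^ 2) (hzw : z * u + w * v = 1) :
    LinearMap.ker (cokerMap a g u v z w) =
      LinearMap.range (Matrix.toLin' !![a * u, a * v; a * v, a * u]) := by
  ext x
  simp only [LinearMap.mem_ker, LinearMap.mem_range, Matrix.toLin'_apply, cokerMap_apply,
    Prod.mk_eq_zero, ZMod.intCast_zmod_eq_zero_iff_dvd, Nat.cast_mul, hg]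
  constructor
  · rintro ⟨⟨m, hm⟩, ⟨n, hn⟩⟩
    -- undo the column operation on `diag(a, a g) (m, n)`
    refine ⟨![m - (z * v + w * u) * n, n], funext fun i => ?_⟩
    fin_cases i <;>
      simp only [Matrix.mulVec, dotProduct, Fin.zero_eta, Fin.mk_one, Fin.isValue, Matrix.of_apply,
        Matrix.cons_val', Matrix.cons_val_fin_one, Matrix.cons_val_zero, Matrix.cons_val_one,
        Fin.sum_univ_two]
    · linear_combination -u * hm + w * hn + (x 0 - a * v * n) * hzw
    · linear_combination -v * hm - z * hn + (x 1 - a * u * n) * hzw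
  · rintro ⟨c, rfl⟩
    constructor
    · exact ⟨z * (u * c 0 + v * c 1) + w * (v * c 0 + u * c 1), by
        simp [Matrix.mulVec, dotProduct, Fin.sum_univ_two]; ring⟩
    · exact ⟨c 1, by simp [Matrix.mulVec, dotProduct, Fin.sum_univ_two]; ring⟩

variable (u v z w)

noncomputable def cokerEquiv (hg : (g : ℤ) = u ^ 2 - v ^ 2) (hzw : z * u + w * v = 1) :
    ((Fin 2 → ℤ) ⧸ LinearMap.range (Matrix.toLin' !![a * u, a * v; a * v, a * u])) ≃ₗ[ℤ]
      ZMod a × ZMod (a * g) :=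
  (Submodule.quotEquivOfEq _ _ (ker_cokerMap a hg hzw).symm).trans
    (LinearMap.quotKerEquivOfSurjective _ (cokerMap_surjective a g hzw))

theorem cokerEquiv_mk (hg : (g : ℤ) = u ^ 2 - v ^ 2) (hzw : z * u + w * v = 1)
    (x : Fin 2 → ℤ) :
    cokerEquiv a u v z w hg hzw (Submodule.Quotient.mk x) = cokerMap a g u v z w x :=
  rfl

end CokerSymmetric

theorem coker_matrix_general_general (p q a u v g : ℕ) (hpq : q < p)
    (ha : a = Nat.gcd p q) (hu : u = p / a) (hv : v = q / a) (hg : g = u ^ 2 - v ^ 2)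
    (z w : ℤ) (hzw : z * u + w * v = 1) :
    ∃ e : ((Fin 2 → ℤ) ⧸
        LinearMap.range (Matrix.toLin' !![(p : ℤ), q; q, p])) ≃+ ZMod a × ZMod (a * g),
      e (Submodule.Quotient.mk ![1, 1]) =
        (((z + w : ℤ) : ZMod a), ((u : ZMod (a * g)) - (v : ZMod (a * g)))) := by
  have hp : p = a * u := by rw [hu, Nat.mul_div_cancel' (ha ▸ Nat.gcd_dvd_left p q)]
  have hq : q = a * v := by rw [hv, Nat.mul_div_cancel' (ha ▸ Nat.gcd_dvd_right p q)]
  have hvu : v ≤ u := by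
    rw [hp, hq] at hpq
    exact (lt_of_mul_lt_mul_left hpq (Nat.zero_le a)).le
  have hgZ : (g : ℤ) = (u : ℤ) ^ 2 - (v : ℤ) ^ 2 := by
    rw [hg, Nat.cast_sub (Nat.pow_le_pow_left hvu 2)]; push_cast; ring
  subst hp hq
  refine ⟨(CokerSymmetric.cokerEquiv a u v z w hgZ hzw).toAddEquiv,
    (CokerSymmetric.cokerEquiv_mk a u v z w hgZ hzw ![1, 1]).trans ?_⟩
  simp

/-- For integers `p > q > 0` with `a = gcd(p,q)`, `u = p/a`, `v = q/a`, `g = u² − v²`,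
the cokernel of `B = [[p, q], [q, p]]` on `ℤ²` is `ℤ_a ⊕ ℤ_{a·g}`, and if `zu + wv = 1`
then the class of `(1,1)` corresponds to `(z + w, u − v)`. -/
theorem coker_matrix_general (p q a u v g : ℕ) (hq : 0 < q) (hpq : q < p)
    (ha : a = Nat.gcd p q) (hu : u = p / a) (hv : v = q / a) (hg : g = u ^ 2 - v ^ 2)
    (z w : ℤ) (hzw : z * u + w * v = 1) :
    ∃ e : ((Fin 2 → ℤ) ⧸
        LinearMap.range (Matrix.toLin' !![(p : ℤ), q; q, p])) ≃+ ZMod a × ZMod (a * g),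
      e (Submodule.Quotient.mk ![1, 1]) =
        (((z + w : ℤ) : ZMod a), ((u : ZMod (a * g)) - (v : ZMod (a * g)))) :=
  coker_matrix_general_general p q a u v g hpq ha hu hv hg z w hzw
end
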